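/- For every T with 0 < T and T < 1.2, one has b₂(T) < 2.48 and b₄(T) < 1.53, where b₂(T) = (2·tanh(2T) + tanh(T))/(2·tanh(2T) − tanh(T)) and b₄(T) = (4·tanh(4T) + tanh(T))/(4·tanh(4T) − tanh(T)). -/

import Mathlib

open Real

lemma my_tanh_two_mul (x : ℝ) : tanh (2 * x) = 2 * tanh x / (1 + tanh x ^ 2) := by
  have hc := Real.cosh_pos x
  have hc2 := Real.cosh_pos (2 * x)
  rw [Real.tanh_eq_sinh_div_cosh, Real.tanh_eq_sinh_div_cosh,
    Real.sinh_two_mul, Real.cosh_two_mul]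
  have h1 : (1 : ℝ) + (sinh x / cosh x) ^ 2 = (cosh x ^ 2 + sinh x ^ 2) / cosh x ^ 2 := by
    field_simp
  rw [h1]
  have hd : (0:ℝ) < cosh x ^ 2 + sinh x ^ 2 := by positivity
  field_simp

lemma my_tanh_pos {x : ℝ} (hx : 0 < x) : 0 < tanh x := by
  rw [Real.tanh_eq_sinh_div_cosh]
  exact div_pos (Real.sinh_pos_iff.2 hx) (Real.cosh_pos x)

lemma my_tanh_lt_tanh {a b : ℝ} (h : a < b) : tanh a < tanh b := by
  rw [Real.tanh_eq_sinh_div_cosh, Real.tanh_eq_sinh_div_cosh,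
    div_lt_div_iff₀ (Real.cosh_pos a) (Real.cosh_pos b)]
  have hs : 0 < Real.sinh (b - a) := Real.sinh_pos_iff.2 (by linarith)
  rw [Real.sinh_sub] at hs
  nlinarith

lemma my_exp_24_lt : Real.exp 2.4 < 11.2 := by
  have h1 : Real.exp 1 < 2.7182818286 := Real.exp_one_lt_d9
  have h05 : Real.exp 0.05 < 1 / 0.95 := by
    have h := Real.add_one_lt_exp (x := -0.05) (by norm_num)
    have hmul : Real.exp (-0.05) * Real.exp 0.05 = 1 := by
      rw [← Real.exp_add]; norm_num
    nlinarith [Real.exp_pos (0.05:ℝ), Real.exp_pos (-0.05:ℝ)]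
  have he : Real.exp 2.4 = Real.exp 1 * Real.exp 1 * Real.exp 0.05 ^ (8:ℕ) := by
    rw [← Real.exp_nat_mul, ← Real.exp_add, ← Real.exp_add]
    norm_num
  rw [he]
  have he1 : (0:ℝ) < Real.exp 1 := Real.exp_pos 1
  have he5 : (0:ℝ) < Real.exp 0.05 := Real.exp_pos _
  have h8 : Real.exp 0.05 ^ (8:ℕ) < (1/0.95) ^ (8:ℕ) := by
    exact pow_lt_pow_left₀ h05 he5.le (by norm_num)
  calc Real.exp 1 * Real.exp 1 * Real.exp 0.05 ^ (8:ℕ)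
      < 2.7182818286 * 2.7182818286 * (1/0.95)^(8:ℕ) := by
        apply mul_lt_mul' _ h8 (by positivity) (by norm_num)
        exact le_of_lt (mul_lt_mul'' h1 h1 he1.le he1.le)
    _ < 11.2 := by norm_num

lemma my_tanh_12_lt : tanh 1.2 < 0.8371 := by
  have hE := my_exp_24_lt
  have hEpos : (0:ℝ) < Real.exp 2.4 := Real.exp_pos _
  have hx : Real.exp 1.2 * Real.exp 1.2 = Real.exp 2.4 := by
    rw [← Real.exp_add]; norm_num
  have hxp : (0:ℝ) < Real.exp 1.2 := Real.exp_pos _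
  rw [Real.tanh_eq_sinh_div_cosh, Real.sinh_eq, Real.cosh_eq,
    Real.exp_neg]
  rw [div_lt_iff₀ (by positivity)]
  rw [div_lt_iff₀ (by positivity)] at *
  have hinv : (Real.exp 1.2)⁻¹ * Real.exp 1.2 = 1 := inv_mul_cancel₀ (ne_of_gt hxp)
  nlinarith [hxp, hEpos, hx, hE, mul_pos hxp hxp]

theorem b2_b4_bounds (T : ℝ) (hT : 0 < T) (hT' : T < 1.2) :
    (2 * tanh (2 * T) + tanh T) / (2 * tanh (2 * T) - tanh T) < 2.48 ∧
    (4 * tanh (4 * T) + tanh T) / (4 * tanh (4 * T) - tanh T) < 1.53 := by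
  set v := tanh T with hv
  have hv0 : 0 < v := my_tanh_pos hT
  have hv1 : v < 0.8371 := lt_trans (my_tanh_lt_tanh hT') my_tanh_12_lt
  have hvsq : v ^ 2 < 0.7008 := by nlinarith
  have h2 : tanh (2 * T) = 2 * v / (1 + v ^ 2) := my_tanh_two_mul T
  have h4 : tanh (4 * T) = 2 * tanh (2 * T) / (1 + tanh (2 * T) ^ 2) := by
    have := my_tanh_two_mul (2 * T)
    rw [show (2:ℝ) * (2 * T) = 4 * T by ring] at this
    exact this
  have hden : (0:ℝ) < 1 + v ^ 2 := by positivity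
  constructor
  · rw [h2]
    have key : 2 * (2 * v / (1 + v ^ 2)) + v = v * (5 + v ^ 2) / (1 + v ^ 2) := by
      field_simp; ring
    have key2 : 2 * (2 * v / (1 + v ^ 2)) - v = v * (3 - v ^ 2) / (1 + v ^ 2) := by
      field_simp; ring
    rw [key, key2]
    have h3 : (0:ℝ) < 3 - v ^ 2 := by nlinarith
    have hred : v * (5 + v ^ 2) / (1 + v ^ 2) / (v * (3 - v ^ 2) / (1 + v ^ 2)) =
        (5 + v ^ 2) / (3 - v ^ 2) := by
      rw [div_div_div_eq, div_eq_div_iff (by positivity) (by positivity)]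
      ring
    rw [hred, div_lt_iff₀ h3]
    nlinarith
  · rw [h4, h2]
    have hD : (0:ℝ) < v ^ 4 + 6 * v ^ 2 + 1 := by positivity
    have e1 : (1:ℝ) + (2 * v / (1 + v ^ 2)) ^ 2 =
        (v ^ 4 + 6 * v ^ 2 + 1) / (1 + v ^ 2) ^ 2 := by
      field_simp; ring
    have e2 : 2 * (2 * v / (1 + v ^ 2)) / ((v ^ 4 + 6 * v ^ 2 + 1) / (1 + v ^ 2) ^ 2) =
        4 * v * (1 + v ^ 2) / (v ^ 4 + 6 * v ^ 2 + 1) := by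
      rw [div_eq_div_iff (by positivity) (by positivity)]
      field_simp
      ring
    rw [e1, e2]
    have key : 4 * (4 * v * (1 + v ^ 2) / (v ^ 4 + 6 * v ^ 2 + 1)) + v =
        (v * (v ^ 4 + 22 * v ^ 2 + 17)) / (v ^ 4 + 6 * v ^ 2 + 1) := by
      field_simp; ring
    have key2 : 4 * (4 * v * (1 + v ^ 2) / (v ^ 4 + 6 * v ^ 2 + 1)) - v =
        (v * (15 + 10 * v ^ 2 - v ^ 4)) / (v ^ 4 + 6 * v ^ 2 + 1) := by
      field_simp; ring
    rw [key, key2]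
    have hnum : (0:ℝ) < 15 + 10 * v ^ 2 - v ^ 4 := by nlinarith
    have hred : v * (v ^ 4 + 22 * v ^ 2 + 17) / (v ^ 4 + 6 * v ^ 2 + 1) /
        (v * (15 + 10 * v ^ 2 - v ^ 4) / (v ^ 4 + 6 * v ^ 2 + 1)) =
        (v ^ 4 + 22 * v ^ 2 + 17) / (15 + 10 * v ^ 2 - v ^ 4) := by
      rw [div_div_div_eq, div_eq_div_iff (by positivity) (by positivity)]
      ring
    rw [hred, div_lt_iff₀ hnum]
    nlinarith
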